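/- For every real number a, the random variable Y := a·U + V⁵ − 10·V³ + 15·V satisfies E[Y²] = a² + 120. -/

import Mathlib

/-!
`V = ρU + √(1-ρ²)W` is again standard Gaussian and `Y = aU + He₅(V)`, where
`He₅(x) = x⁵ - 10x³ + 15x` is the fifth Hermite polynomial. Hence
`E[Y²] = a²E[U²] + 2a E[U He₅(V)] + E[He₅(V)²]`. Gaussian integration by parts for the
correlated pair gives `E[U V^(n+1)] = (n+1) ρ E[Vⁿ]`, so `E[U He₅(V)] = ρ E[He₅'(V)] = 0`,
and `E[He₅(V)²] = 5! = 120`; every moment is evaluated through `m (n+2) = (n+1) m n`, which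
comes from `Γ(s+1) = s Γ(s)`.
-/

open MeasureTheory ProbabilityTheory Real Set

lemma integral_Ioi_pow_mul_exp_neg_sq_div_two (n : ℕ) :
    ∫ x in Ioi (0 : ℝ), x ^ n * exp (-x ^ 2 / 2) = 2 ^ (((n : ℝ) - 1) / 2) * Gamma ((n + 1) / 2) := by
  have h := integral_rpow_mul_exp_neg_mul_rpow (p := 2) (q := n) (b := 1 / 2) two_pos
    (by linarith [n.cast_nonneg (α := ℝ)]) one_half_pos
  have hc : (1 / 2 : ℝ) ^ (-((n : ℝ) + 1) / 2) * (1 / 2) = 2 ^ (((n : ℝ) - 1) / 2) := by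
    rw [one_div, inv_rpow zero_le_two, ← rpow_neg zero_le_two, neg_div, neg_neg, ← div_eq_mul_inv,
      ← rpow_sub_one two_ne_zero]
    ring_nf
  rw [hc] at h
  rw [← h]
  refine setIntegral_congr_fun measurableSet_Ioi fun x _ => ?_
  simp only [rpow_natCast, rpow_two]
  ring_nf

lemma integrable_pow_mul_exp_neg_sq_div_two (n : ℕ) :
    Integrable fun x : ℝ => x ^ n * exp (-x ^ 2 / 2) := by
  have h := integrable_rpow_mul_exp_neg_mul_sq (b := 1 / 2) one_half_pos (s := n)
    (by linarith [n.cast_nonneg (α := ℝ)])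
  simp only [rpow_natCast] at h
  convert h using 4
  ring

lemma integral_pow_mul_exp_neg_sq_div_two (n : ℕ) :
    ∫ x, x ^ n * exp (-x ^ 2 / 2)
      = (1 + (-1) ^ n) * ∫ x in Ioi (0 : ℝ), x ^ n * exp (-x ^ 2 / 2) := by
  have hf := integrable_pow_mul_exp_neg_sq_div_two n
  have hneg : ∀ x : ℝ,
      (-x) ^ n * exp (-(-x) ^ 2 / 2) = (-1) ^ n * (x ^ n * exp (-x ^ 2 / 2)) := by
    intro x
    rw [neg_pow, neg_sq]
    ring
  rw [← intervalIntegral.integral_Iic_add_Ioi hf.integrableOn hf.integrableOn,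
    show Iic (0 : ℝ) = Iic (-0) by rw [neg_zero], ← integral_comp_neg_Ioi]
  simp_rw [hneg, integral_const_mul]
  ring

lemma integral_pow_add_two_mul_exp_neg_sq_div_two (n : ℕ) :
    ∫ x, x ^ (n + 2) * exp (-x ^ 2 / 2) = (n + 1) * ∫ x, x ^ n * exp (-x ^ 2 / 2) := by
  simp only [integral_pow_mul_exp_neg_sq_div_two, integral_Ioi_pow_mul_exp_neg_sq_div_two]
  have hpow : (2 : ℝ) ^ ((((n + 2 : ℕ) : ℝ) - 1) / 2) = 2 * 2 ^ (((n : ℝ) - 1) / 2) := by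
    rw [show (((n + 2 : ℕ) : ℝ) - 1) / 2 = 1 + ((n : ℝ) - 1) / 2 by push_cast; ring,
      rpow_add two_pos, rpow_one]
  have hGamma : Gamma ((((n + 2 : ℕ) : ℝ) + 1) / 2)
      = ((n : ℝ) + 1) / 2 * Gamma (((n : ℝ) + 1) / 2) := by
    rw [show (((n + 2 : ℕ) : ℝ) + 1) / 2 = ((n : ℝ) + 1) / 2 + 1 by push_cast; ring,
      Gamma_add_one (by positivity)]
  rw [hpow, hGamma, pow_add]
  ring

namespace ProbabilityTheory

noncomputable def stdGaussianMoment (n : ℕ) : ℝ := ∫ x, x ^ n ∂gaussianReal 0 1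

lemma stdGaussianMoment_eq_integral_mul_exp (n : ℕ) :
    stdGaussianMoment n = (√(2 * π))⁻¹ * ∫ x, x ^ n * exp (-x ^ 2 / 2) := by
  rw [stdGaussianMoment, integral_gaussianReal_eq_integral_smul one_ne_zero, ← integral_const_mul]
  congr with x
  simp [gaussianPDFReal]
  ring

lemma stdGaussianMoment_zero : stdGaussianMoment 0 = 1 := by
  simp [stdGaussianMoment]

lemma stdGaussianMoment_one : stdGaussianMoment 1 = 0 := by
  simp [stdGaussianMoment, integral_id_gaussianReal]

lemma stdGaussianMoment_add_two (n : ℕ) :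
    stdGaussianMoment (n + 2) = (n + 1) * stdGaussianMoment n := by
  simp only [stdGaussianMoment_eq_integral_mul_exp, integral_pow_add_two_mul_exp_neg_sq_div_two]
  ring

lemma integrable_pow_gaussianReal (m : ℝ) (v : NNReal) (n : ℕ) :
    Integrable (fun x : ℝ => x ^ n) (gaussianReal m v) := by
  rw [← integrable_norm_iff (by fun_prop)]
  simpa [norm_pow] using (memLp_id_gaussianReal (μ := m) (v := v) n).integrable_norm_pow'

section GaussianPair

variable {Ω : Type*} [MeasurableSpace Ω] {μ : Measure Ω}

lemma HasLaw.integrable_pow_of_gaussianReal {X : Ω → ℝ} {m : ℝ} {v : NNReal}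
    (hX : HasLaw X (gaussianReal m v) μ) (n : ℕ) : Integrable (fun ω => X ω ^ n) μ :=
  (integrable_map_measure (continuous_pow n).aestronglyMeasurable hX.aemeasurable).1
    (hX.map_eq ▸ integrable_pow_gaussianReal m v n)

lemma HasLaw.integrable_pow_mul_pow_of_gaussianReal {X Y : Ω → ℝ} {m₁ m₂ : ℝ} {v₁ v₂ : NNReal}
    (hX : HasLaw X (gaussianReal m₁ v₁) μ) (hY : HasLaw Y (gaussianReal m₂ v₂) μ) (j k : ℕ) :
    Integrable (fun ω => X ω ^ j * Y ω ^ k) μ := by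
  have memLp_two {Z : Ω → ℝ} {m : ℝ} {v : NNReal} (hZ : HasLaw Z (gaussianReal m v) μ) (n : ℕ) :
      MemLp (fun ω => Z ω ^ n) 2 μ :=
    (memLp_two_iff_integrable_sq (hZ.integrable_pow_of_gaussianReal n).aestronglyMeasurable).2
      (by simpa only [← pow_mul] using hZ.integrable_pow_of_gaussianReal (n * 2))
  exact (memLp_two hX j).integrable_mul (memLp_two hY k)

lemma HasLaw.integral_pow_eq_stdGaussianMoment {X : Ω → ℝ}
    (hX : HasLaw X (gaussianReal 0 1) μ) (n : ℕ) : ∫ ω, X ω ^ n ∂μ = stdGaussianMoment n :=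
  hX.integral_comp (f := fun x => x ^ n) (continuous_pow n).aestronglyMeasurable

variable {U W : Ω → ℝ}

lemma IndepFun.hasLaw_mul_add_mul_stdGaussian (hUW : IndepFun U W μ)
    (hU : HasLaw U (gaussianReal 0 1) μ) (hW : HasLaw W (gaussianReal 0 1) μ) {ρ σ : ℝ}
    (h : ρ ^ 2 + σ ^ 2 = 1) :
    HasLaw (fun ω => ρ * U ω + σ * W ω) (gaussianReal 0 1) μ := by
  have hsum := (hUW.comp (measurable_const_mul ρ) (measurable_const_mul σ)).hasLaw_add
    (gaussianReal_const_mul hU ρ) (gaussianReal_const_mul hW σ)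
  rw [gaussianReal_conv_gaussianReal] at hsum
  convert hsum using 2
  · rfl
  · simp
  · rw [← NNReal.coe_inj]
    simp [h]

lemma IndepFun.integral_pow_mul_pow_of_stdGaussian (hUW : IndepFun U W μ)
    (hU : HasLaw U (gaussianReal 0 1) μ) (hW : HasLaw W (gaussianReal 0 1) μ) (j k : ℕ) :
    ∫ ω, U ω ^ j * W ω ^ k ∂μ = stdGaussianMoment j * stdGaussianMoment k := by
  refine ((hUW.comp (measurable_id.pow_const j) (measurable_id.pow_const k)
    ).integral_fun_mul_eq_mul_integral
    (hU.integrable_pow_of_gaussianReal j).aestronglyMeasurable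
    (hW.integrable_pow_of_gaussianReal k).aestronglyMeasurable).trans ?_
  exact congr_arg₂ _ (hU.integral_pow_eq_stdGaussianMoment j)
    (hW.integral_pow_eq_stdGaussianMoment k)

lemma IndepFun.integral_pow_mul_mul_add_mul_pow (hUW : IndepFun U W μ)
    (hU : HasLaw U (gaussianReal 0 1) μ) (hW : HasLaw W (gaussianReal 0 1) μ)
    (ρ σ : ℝ) (l n : ℕ) :
    ∫ ω, U ω ^ l * (ρ * U ω + σ * W ω) ^ n ∂μ = ∑ i ∈ Finset.range (n + 1),
      ρ ^ i * σ ^ (n - i) * n.choose i * (stdGaussianMoment (i + l) * stdGaussianMoment (n - i)) := by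
  have expand : ∀ ω, U ω ^ l * (ρ * U ω + σ * W ω) ^ n = ∑ i ∈ Finset.range (n + 1),
      ρ ^ i * σ ^ (n - i) * n.choose i * (U ω ^ (i + l) * W ω ^ (n - i)) := fun ω => by
    rw [add_pow, Finset.mul_sum]
    exact Finset.sum_congr rfl fun i _ => by ring
  simp_rw [expand]
  rw [integral_finsetSum _ fun i _ =>
    (hU.integrable_pow_mul_pow_of_gaussianReal hW _ _).const_mul _]
  simp_rw [integral_const_mul, hUW.integral_pow_mul_pow_of_stdGaussian hU hW]

/-- Stein's identity `E[U g(V)] = Cov(U, V) E[g'(V)]` for `V = ρU + σW` and `g = x ^ (n + 1)`. -/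
theorem IndepFun.integral_mul_mul_add_mul_pow_succ (hUW : IndepFun U W μ)
    (hU : HasLaw U (gaussianReal 0 1) μ) (hW : HasLaw W (gaussianReal 0 1) μ) (ρ σ : ℝ) (n : ℕ) :
    ∫ ω, U ω * (ρ * U ω + σ * W ω) ^ (n + 1) ∂μ
      = (n + 1) * ρ * ∫ ω, (ρ * U ω + σ * W ω) ^ n ∂μ := by
  have h₁ := hUW.integral_pow_mul_mul_add_mul_pow hU hW ρ σ 1 (n + 1)
  have h₀ := hUW.integral_pow_mul_mul_add_mul_pow hU hW ρ σ 0 n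
  simp only [pow_one, pow_zero, one_mul, add_zero] at h₁ h₀
  rw [h₁, h₀, Finset.sum_range_succ', Finset.mul_sum, zero_add, stdGaussianMoment_one]
  simp only [mul_zero, zero_mul, add_zero]
  refine Finset.sum_congr rfl fun i _ => ?_
  have hchoose : ((n + 1).choose (i + 1) : ℝ) * (i + 1) = (n + 1) * n.choose i := by
    exact_mod_cast (Nat.add_one_mul_choose_eq n i).symm
  rw [stdGaussianMoment_add_two, Nat.add_sub_add_right]
  linear_combination ρ ^ (i + 1) * σ ^ (n - i) * stdGaussianMoment i *
    stdGaussianMoment (n - i) * hchoose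

end GaussianPair

end ProbabilityTheory

theorem stmt_10_general
    {Ω : Type*} [MeasurableSpace Ω] (μ : Measure Ω)
    (U W : Ω → ℝ) (hUm : Measurable U) (hWm : Measurable W)
    (hUW : IndepFun U W μ)
    (hU : Measure.map U μ = gaussianReal 0 1)
    (hW : Measure.map W μ = gaussianReal 0 1)
    (ρ : ℝ) (hρ : ρ ∈ Set.Icc (-1 : ℝ) 1)
    (V : Ω → ℝ) (hV : ∀ ω, V ω = ρ * U ω + Real.sqrt (1 - ρ ^ 2) * W ω)
    (a : ℝ) (Y : Ω → ℝ) (hY : ∀ ω, Y ω = a * U ω + (V ω) ^ 5 - 10 * (V ω) ^ 3 + 15 * V ω) :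
    ∫ ω, (Y ω) ^ 2 ∂μ = a ^ 2 + 120 := by
  have hU' : HasLaw U (gaussianReal 0 1) μ := ⟨hUm.aemeasurable, hU⟩
  have hW' : HasLaw W (gaussianReal 0 1) μ := ⟨hWm.aemeasurable, hW⟩
  have hρσ : ρ ^ 2 + √(1 - ρ ^ 2) ^ 2 = 1 := by
    rw [sq_sqrt (by nlinarith [hρ.1, hρ.2])]
    ring
  have hV' : HasLaw V (gaussianReal 0 1) μ :=
    (hUW.hasLaw_mul_add_mul_stdGaussian hU' hW' hρσ).congr (ae_of_all _ hV)
  have hStein := hUW.integral_mul_mul_add_mul_pow_succ hU' hW' ρ √(1 - ρ ^ 2)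
  simp only [← hV] at hStein
  have hUU := hU'.integrable_pow_of_gaussianReal
  have hVV := hV'.integrable_pow_of_gaussianReal
  have hUV := hU'.integrable_pow_mul_pow_of_gaussianReal hV' 1
  simp only [pow_one] at hUV
  -- `V ω ^ 1` lets `hStein` apply with `n = 0`.
  have hY2 : ∀ ω, Y ω ^ 2 = a ^ 2 * U ω ^ 2
      + 2 * a * (U ω * V ω ^ 5 - 10 * (U ω * V ω ^ 3) + 15 * (U ω * V ω ^ 1))
      + (V ω ^ 10 - 20 * V ω ^ 8 + 130 * V ω ^ 6 - 300 * V ω ^ 4 + 225 * V ω ^ 2) := fun ω => by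
    rw [hY]
    ring
  simp_rw [hY2]
  simp (disch := fun_prop) only [integral_add, integral_sub, integral_const_mul, hStein,
    hU'.integral_pow_eq_stdGaussianMoment, hV'.integral_pow_eq_stdGaussianMoment,
    stdGaussianMoment_add_two, stdGaussianMoment_zero]
  push_cast
  ring

theorem stmt_10
    {Ω : Type*} [MeasurableSpace Ω] (μ : Measure Ω) [IsProbabilityMeasure μ]
    (U W : Ω → ℝ) (hUm : Measurable U) (hWm : Measurable W)
    (hUW : IndepFun U W μ)
    (hU : Measure.map U μ = gaussianReal 0 1)
    (hW : Measure.map W μ = gaussianReal 0 1)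
    (ρ : ℝ) (hρ : ρ ∈ Set.Icc (-1 : ℝ) 1)
    (V : Ω → ℝ) (hV : ∀ ω, V ω = ρ * U ω + Real.sqrt (1 - ρ ^ 2) * W ω)
    (a : ℝ) (Y : Ω → ℝ) (hY : ∀ ω, Y ω = a * U ω + (V ω) ^ 5 - 10 * (V ω) ^ 3 + 15 * V ω) :
    ∫ ω, (Y ω) ^ 2 ∂μ = a ^ 2 + 120 :=
  stmt_10_general μ U W hUm hWm hUW hU hW ρ hρ V hV a Y hY
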